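/- arXiv:2406.05811 — 8 statements merged into one kernel-verified Lean document; each statement's English description precedes it below -/
import Mathlib

section
/- Let n ≥ 1 and let x = (X₁,…,Xₙ)ᵀ be a random vector whose entries X₁,…,Xₙ are i.i.d. complex random variables with 𝔼X₁ = 0, 𝔼|X₁|² = 1 and 𝔼|X₁|⁴ < ∞, and let M and N be non-random n×n complex matrices. Then 𝔼[(x*Mx − tr M)(x*Nx − tr N)] = (𝔼|X₁|⁴ − |𝔼X₁²|² − 2)·Σᵢ Mᵢᵢ Nᵢᵢ + |𝔼X₁²|²·tr(M Nᵀ) + tr(M N). -/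
/-!
Expanding both quadratic forms reduces the claim to the fourth mixed moments
`𝔼[conj Xᵢ Xⱼ conj Xₖ Xₗ]`. Writing the monomial as `∏ₚ conj Xₚ ^ cₚ * Xₚ ^ dₚ`, independence
factorises it into one-dimensional moments `𝔼[conj X ^ a * X ^ b]`; any index that occurs only once
contributes `𝔼X = 0`, so only the pairings survive, giving
`δᵢⱼδₖₗ + δᵢₗδⱼₖ + |𝔼X²|² δᵢₖδⱼₗ + (𝔼|X|⁴ - |𝔼X²|² - 2) δᵢⱼδⱼₖδₖₗ`, where the last term corrects
the fully diagonal case. Summing against `Mᵢⱼ Nₖₗ` and subtracting `𝔼[x*Mx] 𝔼[x*Nx] = tr M tr N`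
gives the formula. Finite fourth moments make every monomial integrable by Hölder's inequality.
-/

open MeasureTheory ProbabilityTheory Matrix Finset ComplexConjugate

section QuadraticFormAlgebra

variable {ι : Type*} [Fintype ι]

lemma quadForm_eq_sum_mul_conj_mul (M : Matrix ι ι ℂ) (x : ι → ℂ) :
    ∑ i, ∑ j, conj (x i) * M i j * x j = ∑ i, ∑ j, M i j * (conj (x i) * x j) := by
  simp_rw [mul_assoc, mul_left_comm (conj _)]

lemma quadForm_mul_quadForm (M N : Matrix ι ι ℂ) (x : ι → ℂ) :
    (∑ i, ∑ j, conj (x i) * M i j * x j) * (∑ k, ∑ l, conj (x k) * N k l * x l) =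
      ∑ i, ∑ j, ∑ k, ∑ l, M i j * N k l * (conj (x i) * x j * (conj (x k) * x l)) := by
  simp only [sum_mul]
  simp only [mul_sum]
  exact sum_congr rfl fun i _ => sum_congr rfl fun j _ => sum_congr rfl fun k _ =>
    sum_congr rfl fun l _ => by ring

end QuadraticFormAlgebra

section IndexPatterns

variable {ι : Type*} [Fintype ι] [DecidableEq ι]

lemma Finset.prod_pow_piSingle {M : Type*} [CommMonoid M] (f : ι → M) (i : ι) :
    ∏ p, f p ^ (Pi.single i 1 : ι → ℕ) p = f i := by
  simp [Pi.single_apply, pow_ite]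

/-- `𝔼[conj xᵢ xⱼ conj xₖ xₗ]` for a vector of i.i.d. standardized entries with `|𝔼 x²|² = s` and
`𝔼|x|⁴ = κ`. -/
def iidFourthMoment (s κ : ℂ) (i j k l : ι) : ℂ :=
  (if i = j then 1 else 0) * (if k = l then 1 else 0) +
    (if i = l then 1 else 0) * (if j = k then 1 else 0) +
    s * ((if i = k then 1 else 0) * (if j = l then 1 else 0)) +
    (κ - s - 2) * ((if i = j then 1 else 0) * (if j = k then 1 else 0) * (if k = l then 1 else 0))

lemma prod_apply_piSingle (m : ℕ → ℕ → ℂ) (h00 : m 0 0 = 1) (i j : ι) :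
    ∏ p, m ((Pi.single i 1 : ι → ℕ) p) ((Pi.single j 1 : ι → ℕ) p) =
      if i = j then m 1 1 else m 1 0 * m 0 1 := by
  by_cases hij : i = j
  · subst hij
    rw [prod_eq_single i (fun p _ hp => by simp [hp, h00]) (by simp)]
    simp
  · rw [prod_eq_mul i j hij (fun p _ hp => by simp [hp.1, hp.2, h00]) (by simp) (by simp)]
    simp [hij, Ne.symm hij]

lemma prod_apply_piSingle_add_piSingle (m : ℕ → ℕ → ℂ) (h00 : m 0 0 = 1)
    (h10 : m 1 0 = 0) (h01 : m 0 1 = 0) (h11 : m 1 1 = 1) (i j k l : ι) :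
    ∏ p, m ((Pi.single i 1 + Pi.single k 1 : ι → ℕ) p)
        ((Pi.single j 1 + Pi.single l 1 : ι → ℕ) p) =
      iidFourthMoment (m 2 0 * m 0 2) (m 2 2) i j k l := by
  rw [← prod_subset (subset_univ {i, j, k, l}) fun p _ hp => by
    simp only [mem_insert, mem_singleton, not_or] at hp
    simp [hp, h00]]
  unfold iidFourthMoment
  -- only the coordinates `i, j, k, l` contribute; one case per equality pattern among them
  by_cases hij : i = j <;> by_cases hik : i = k <;> by_cases hil : i = l <;>
    by_cases hjk : j = k <;> by_cases hjl : j = l <;> by_cases hkl : k = l <;>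
    subst_vars <;> simp_all [prod_insert, Pi.single_apply, Ne.symm]
  ring

lemma sum_mul_mul_iidFourthMoment (M N : Matrix ι ι ℂ) (s κ : ℂ) :
    ∑ i, ∑ j, ∑ k, ∑ l, M i j * N k l * iidFourthMoment s κ i j k l =
      trace M * trace N + trace (M * N) + s * trace (M * Nᵀ) +
        (κ - s - 2) * ∑ i, M i i * N i i := by
  simp only [iidFourthMoment, mul_add, sum_add_distrib]
  simp only [trace, Matrix.diag, sum_mul_sum]
  simp [mul_apply, mul_ite, sum_mul, mul_comm s, mul_comm (κ - s - 2)]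

end IndexPatterns

section Moments

variable {Ω : Type*} [MeasurableSpace Ω] {μ : Measure Ω}

noncomputable def mixedMoment (Z : Ω → ℂ) (μ : Measure Ω) (a b : ℕ) : ℂ :=
  ∫ ω, conj (Z ω) ^ a * Z ω ^ b ∂μ

lemma mixedMoment_zero_zero [IsProbabilityMeasure μ] (Z : Ω → ℂ) : mixedMoment Z μ 0 0 = 1 := by
  simp [mixedMoment]

lemma mixedMoment_one_zero (Z : Ω → ℂ) : mixedMoment Z μ 1 0 = conj (∫ ω, Z ω ∂μ) := by
  simp [mixedMoment, integral_conj]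

lemma mixedMoment_zero_one (Z : Ω → ℂ) : mixedMoment Z μ 0 1 = ∫ ω, Z ω ∂μ := by
  simp [mixedMoment]

lemma mixedMoment_self (Z : Ω → ℂ) (a : ℕ) :
    mixedMoment Z μ a a = ((∫ ω, ‖Z ω‖ ^ (2 * a) ∂μ : ℝ) : ℂ) := by
  rw [mixedMoment, ← integral_complex_ofReal]
  congr 1 with ω
  rw [← mul_pow, mul_comm, Complex.mul_conj, Complex.normSq_eq_norm_sq, pow_mul]
  push_cast; rfl

lemma mixedMoment_two_zero_mul_zero_two (Z : Ω → ℂ) :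
    mixedMoment Z μ 2 0 * mixedMoment Z μ 0 2 = ((‖∫ ω, Z ω ^ 2 ∂μ‖ ^ 2 : ℝ) : ℂ) := by
  simp [mixedMoment, ← map_pow, integral_conj, Complex.conj_mul']

variable {ι : Type*} [Fintype ι] {X : ι → Ω → ℂ} {Z : Ω → ℂ}

lemma ProbabilityTheory.iIndepFun.integral_prod_conj_pow_mul_pow (hX : iIndepFun X μ)
    (hident : ∀ p, IdentDistrib (X p) Z μ μ) (c d : ι → ℕ) :
    ∫ ω, ∏ p, conj (X p ω) ^ c p * X p ω ^ d p ∂μ = ∏ p, mixedMoment Z μ (c p) (d p) := by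
  rw [hX.integral_fun_prod_comp (f := fun p z => conj z ^ c p * z ^ d p)
    (fun p => (hident p).aemeasurable_fst) (fun p => by fun_prop)]
  exact prod_congr rfl fun p _ =>
    ((hident p).comp (u := fun z => conj z ^ c p * z ^ d p) (by fun_prop)).integral_eq

variable [DecidableEq ι]

lemma ProbabilityTheory.iIndepFun.integral_conj_mul (hX : iIndepFun X μ)
    (hident : ∀ p, IdentDistrib (X p) Z μ μ) (hmean : ∫ ω, Z ω ∂μ = 0)
    (hvar : ∫ ω, ‖Z ω‖ ^ 2 ∂μ = 1) (i j : ι) :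
    ∫ ω, conj (X i ω) * X j ω ∂μ = if i = j then 1 else 0 := by
  have := hX.isProbabilityMeasure
  have hword : ∀ ω, ∏ p, conj (X p ω) ^ (Pi.single i 1 : ι → ℕ) p *
      X p ω ^ (Pi.single j 1 : ι → ℕ) p = conj (X i ω) * X j ω := fun ω => by
    rw [prod_mul_distrib, prod_pow_piSingle, prod_pow_piSingle]
  simp_rw [← hword]
  rw [hX.integral_prod_conj_pow_mul_pow hident, prod_apply_piSingle _ (mixedMoment_zero_zero Z),
    mixedMoment_self, mixedMoment_zero_one, hmean, mul_one, hvar, mul_zero, Complex.ofReal_one]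

lemma ProbabilityTheory.iIndepFun.integral_conj_mul_mul_conj_mul (hX : iIndepFun X μ)
    (hident : ∀ p, IdentDistrib (X p) Z μ μ) (hmean : ∫ ω, Z ω ∂μ = 0)
    (hvar : ∫ ω, ‖Z ω‖ ^ 2 ∂μ = 1) (i j k l : ι) :
    ∫ ω, conj (X i ω) * X j ω * (conj (X k ω) * X l ω) ∂μ =
      iidFourthMoment ((‖∫ ω, Z ω ^ 2 ∂μ‖ ^ 2 : ℝ) : ℂ) ((∫ ω, ‖Z ω‖ ^ 4 ∂μ : ℝ) : ℂ) i j k l := by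
  have := hX.isProbabilityMeasure
  have hword : ∀ ω, ∏ p, conj (X p ω) ^ (Pi.single i 1 + Pi.single k 1 : ι → ℕ) p *
      X p ω ^ (Pi.single j 1 + Pi.single l 1 : ι → ℕ) p =
      conj (X i ω) * X j ω * (conj (X k ω) * X l ω) := fun ω => by
    simp only [Pi.add_apply, pow_add, prod_mul_distrib, prod_pow_piSingle]
    ring
  have h11 : mixedMoment Z μ 1 1 = 1 := by rw [mixedMoment_self, mul_one, hvar, Complex.ofReal_one]
  simp_rw [← hword]
  rw [hX.integral_prod_conj_pow_mul_pow hident,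
    prod_apply_piSingle_add_piSingle _ (mixedMoment_zero_zero Z)
      (by rw [mixedMoment_one_zero, hmean, map_zero]) (by rw [mixedMoment_zero_one, hmean]) h11,
    mixedMoment_two_zero_mul_zero_two, mixedMoment_self]

end Moments

section QuadraticForms

variable {Ω : Type*} [MeasurableSpace Ω] {μ : Measure Ω} {ι : Type*} [Fintype ι]
  {X : ι → Ω → ℂ}

instance ENNReal.HolderTriple.four_four_two : ENNReal.HolderTriple 4 4 2 :=
  ⟨by rw [← two_mul, show (4 : ENNReal) = 2 * 2 by norm_num, ENNReal.mul_inv (by simp) (by simp),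
    ← mul_assoc, ENNReal.mul_inv_cancel (by simp) (by simp), one_mul]⟩

lemma memLp_of_integrable_norm_pow {E : Type*} [NormedAddCommGroup E] {f : Ω → E} {n : ℕ}
    (hn : n ≠ 0) (hf : AEStronglyMeasurable f μ) (hint : Integrable (fun ω => ‖f ω‖ ^ n) μ) :
    MemLp f n μ := by
  rw [← integrable_norm_rpow_iff hf (by simpa using hn) (by simp)]
  simpa using hint

lemma MeasureTheory.MemLp.integrable_conj_mul_mul_conj_mul {f g h k : Ω → ℂ}
    (hf : MemLp f 4 μ) (hg : MemLp g 4 μ) (hh : MemLp h 4 μ) (hk : MemLp k 4 μ) :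
    Integrable (fun ω => conj (f ω) * g ω * (conj (h ω) * k ω)) μ :=
  (hg.mul' hf.star (r := 2)).integrable_mul (hk.mul' hh.star (r := 2))

lemma MeasureTheory.MemLp.integrable_conj_mul [IsFiniteMeasure μ] {f g : Ω → ℂ}
    (hf : MemLp f 4 μ) (hg : MemLp g 4 μ) : Integrable (fun ω => conj (f ω) * g ω) μ :=
  (hg.mul' hf.star (r := 2)).integrable (by norm_num)

lemma integrable_quadForm [IsFiniteMeasure μ] (hX : ∀ i, MemLp (X i) 4 μ) (M : Matrix ι ι ℂ) :
    Integrable (fun ω => ∑ i, ∑ j, conj (X i ω) * M i j * X j ω) μ := by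
  have := fun i j => (hX i).integrable_conj_mul (hX j)
  simp_rw [quadForm_eq_sum_mul_conj_mul _ (X · _)]
  fun_prop

lemma integral_quadForm_eq_trace [IsFiniteMeasure μ] (hX : ∀ i, MemLp (X i) 4 μ)
    [DecidableEq ι] (hpair : ∀ i j, ∫ ω, conj (X i ω) * X j ω ∂μ = if i = j then 1 else 0)
    (M : Matrix ι ι ℂ) :
    ∫ ω, ∑ i, ∑ j, conj (X i ω) * M i j * X j ω ∂μ = trace M := by
  have := fun i j => (hX i).integrable_conj_mul (hX j)
  simp_rw [quadForm_eq_sum_mul_conj_mul _ (X · _)]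
  simp (disch := fun_prop) only [integral_finsetSum, integral_const_mul, hpair]
  simp [trace]

lemma integrable_quadForm_mul_quadForm (hX : ∀ i, MemLp (X i) 4 μ) (M N : Matrix ι ι ℂ) :
    Integrable (fun ω => (∑ i, ∑ j, conj (X i ω) * M i j * X j ω) *
      (∑ k, ∑ l, conj (X k ω) * N k l * X l ω)) μ := by
  have := fun i j k l => (hX i).integrable_conj_mul_mul_conj_mul (hX j) (hX k) (hX l)
  simp_rw [quadForm_mul_quadForm _ _ (X · _)]
  fun_prop

lemma integral_quadForm_mul_quadForm (hX : ∀ i, MemLp (X i) 4 μ) (M N : Matrix ι ι ℂ) :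
    ∫ ω, (∑ i, ∑ j, conj (X i ω) * M i j * X j ω) * (∑ k, ∑ l, conj (X k ω) * N k l * X l ω) ∂μ =
      ∑ i, ∑ j, ∑ k, ∑ l,
        M i j * N k l * ∫ ω, conj (X i ω) * X j ω * (conj (X k ω) * X l ω) ∂μ := by
  have := fun i j k l => (hX i).integrable_conj_mul_mul_conj_mul (hX j) (hX k) (hX l)
  simp_rw [quadForm_mul_quadForm _ _ (X · _)]
  simp (disch := fun_prop) only [integral_finsetSum, integral_const_mul]

end QuadraticForms

lemma integral_sub_mul_sub {Ω : Type*} [MeasurableSpace Ω] {μ : Measure Ω}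
    [IsProbabilityMeasure μ] {f g : Ω → ℂ} {a b : ℂ} (hf : Integrable f μ) (hg : Integrable g μ)
    (hfg : Integrable (fun ω => f ω * g ω) μ) (ha : ∫ ω, f ω ∂μ = a) (hb : ∫ ω, g ω ∂μ = b) :
    ∫ ω, (f ω - a) * (g ω - b) ∂μ = ∫ ω, f ω * g ω ∂μ - a * b := by
  simp_rw [sub_mul, mul_sub]
  simp (disch := fun_prop) only [integral_sub, integral_mul_const, integral_const_mul,
    integral_const, ha, hb]
  simp

theorem stmt_0_general {Ω : Type*} [MeasurableSpace Ω] (μ : Measure Ω) [IsProbabilityMeasure μ]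
    {n : ℕ} (hn : 0 < n) (X : Fin n → Ω → ℂ)
    (hindep : iIndepFun X μ)
    (hident : ∀ i, IdentDistrib (X i) (X ⟨0, hn⟩) μ μ)
    (hmean : (∫ ω, X ⟨0, hn⟩ ω ∂μ) = 0)
    (hvar : (∫ ω, ‖X ⟨0, hn⟩ ω‖ ^ 2 ∂μ) = 1)
    (h4 : Integrable (fun ω => ‖X ⟨0, hn⟩ ω‖ ^ 4) μ)
    (M N : Matrix (Fin n) (Fin n) ℂ) :
    (∫ ω, ((∑ i, ∑ j, (starRingEnd ℂ) (X i ω) * M i j * X j ω) - Matrix.trace M) *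
        ((∑ i, ∑ j, (starRingEnd ℂ) (X i ω) * N i j * X j ω) - Matrix.trace N) ∂μ) =
      (((∫ ω, ‖X ⟨0, hn⟩ ω‖ ^ 4 ∂μ) - ‖∫ ω, (X ⟨0, hn⟩ ω) ^ 2 ∂μ‖ ^ 2 - 2 : ℝ) : ℂ) *
          (∑ i, M i i * N i i) +
        ((‖∫ ω, (X ⟨0, hn⟩ ω) ^ 2 ∂μ‖ ^ 2 : ℝ) : ℂ) * Matrix.trace (M * Nᵀ) +
        Matrix.trace (M * N) := by
  have hL4 : ∀ i, MemLp (X i) 4 μ := fun i =>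
    (hident i).symm.memLp_snd <| memLp_of_integrable_norm_pow (n := 4) (by norm_num)
      (hident i).aemeasurable_snd.aestronglyMeasurable h4
  have htrace := integral_quadForm_eq_trace hL4 (hindep.integral_conj_mul hident hmean hvar)
  rw [integral_sub_mul_sub (integrable_quadForm hL4 M) (integrable_quadForm hL4 N)
      (integrable_quadForm_mul_quadForm hL4 M N) (htrace M) (htrace N),
    integral_quadForm_mul_quadForm hL4]
  simp_rw [hindep.integral_conj_mul_mul_conj_mul hident hmean hvar]
  rw [sum_mul_mul_iidFourthMoment]
  push_cast
  ring

theorem stmt_0 {Ω : Type*} [MeasurableSpace Ω] (μ : Measure Ω) [IsProbabilityMeasure μ]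
    {n : ℕ} (hn : 0 < n) (X : Fin n → Ω → ℂ)
    (hmeas : ∀ i, Measurable (X i))
    (hindep : iIndepFun X μ)
    (hident : ∀ i, IdentDistrib (X i) (X ⟨0, hn⟩) μ μ)
    (hmean : (∫ ω, X ⟨0, hn⟩ ω ∂μ) = 0)
    (hvar : (∫ ω, ‖X ⟨0, hn⟩ ω‖ ^ 2 ∂μ) = 1)
    (h4 : Integrable (fun ω => ‖X ⟨0, hn⟩ ω‖ ^ 4) μ)
    (M N : Matrix (Fin n) (Fin n) ℂ) :
    (∫ ω, ((∑ i, ∑ j, (starRingEnd ℂ) (X i ω) * M i j * X j ω) - Matrix.trace M) *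
        ((∑ i, ∑ j, (starRingEnd ℂ) (X i ω) * N i j * X j ω) - Matrix.trace N) ∂μ) =
      (((∫ ω, ‖X ⟨0, hn⟩ ω‖ ^ 4 ∂μ) - ‖∫ ω, (X ⟨0, hn⟩ ω) ^ 2 ∂μ‖ ^ 2 - 2 : ℝ) : ℂ) *
          (∑ i, M i i * N i i) +
        ((‖∫ ω, (X ⟨0, hn⟩ ω) ^ 2 ∂μ‖ ^ 2 : ℝ) : ℂ) * Matrix.trace (M * Nᵀ) +
        Matrix.trace (M * N) :=
  stmt_0_general μ hn X hindep hident hmean hvar h4 M N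
end

section
/- Let A be an n×n Hermitian complex matrix with spectral decomposition A = U·diag(λ₁,…,λₙ)·U*, where U is unitary and λ₁,…,λₙ are the (real) eigenvalues of A. Let c ∈ ℝ and R > 0 satisfy |λᵢ − c| < R for every i, let B be any n×n complex matrix, and let f : ℂ → ℂ be complex-differentiable on an open set containing the closed disc {z ∈ ℂ : |z − c| ≤ R}. Then A − z·I is invertible for every z on the circle |z − c| = R, and, with f(A) := U·diag(f(λ₁),…,f(λₙ))·U*, one has tr(f(A)·B) = −(1/(2πi))·∮_{|z−c|=R} f(z)·tr((A − z·I)^{-1}·B) dz, where the circle is traversed once in the positive (counterclockwise) direction. -/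
/-!
In the eigenbasis of `A` everything is diagonal: `(A - z)⁻¹ = U diag((λᵢ - z)⁻¹) U*`, so by
cyclicity of the trace `tr((A - z)⁻¹ B) = ∑ᵢ (λᵢ - z)⁻¹ mᵢ` and `tr(f(A) B) = ∑ᵢ f(λᵢ) mᵢ`,
where `mᵢ` is the `i`-th diagonal entry of `U* B U`. The contour integral of
`f z ∑ᵢ (λᵢ - z)⁻¹ mᵢ` is then `-2πi ∑ᵢ f(λᵢ) mᵢ` by Cauchy's integral formula at each `λᵢ`.
-/

open Matrix

open Metric Complex in
theorem DiffContOnCl.circleIntegrable_sub_inv_smul {E : Type*} [NormedAddCommGroup E]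
    [NormedSpace ℂ E] {f : ℂ → E} {c w : ℂ} {R : ℝ} (hf : DiffContOnCl ℂ f (ball c R))
    (hw : w ∈ ball c R) : CircleIntegrable (fun z => (z - w)⁻¹ • f z) c R := by
  have hR : 0 < R := pos_of_mem_ball hw
  refine ContinuousOn.circleIntegrable hR.le (ContinuousOn.smul ?_ ?_)
  · refine (continuousOn_id.sub continuousOn_const).inv₀ fun z hz => sub_ne_zero.2 ?_
    rintro rfl
    exact sphere_disjoint_ball.notMem_of_mem_left hz hw
  · exact hf.continuousOn.mono (sphere_subset_closedBall.trans (closure_ball c hR.ne').ge)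

open Metric Complex Real in
theorem circleIntegral_mul_sum_inv_sub {ι : Type*} (s : Finset ι) {f : ℂ → ℂ} {c : ℂ} {R : ℝ}
    (hf : DiffContOnCl ℂ f (ball c R)) {w : ι → ℂ} (hw : ∀ i ∈ s, w i ∈ ball c R) (m : ι → ℂ) :
    (∮ z in C(c, R), f z * ∑ i ∈ s, (w i - z)⁻¹ * m i) =
      -(2 * π * I) * ∑ i ∈ s, f (w i) * m i := by
  have hsum : (fun z => f z * ∑ i ∈ s, (w i - z)⁻¹ * m i) =
      fun z => ∑ i ∈ s, (-m i) • ((z - w i)⁻¹ • f z) := by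
    ext z
    simp only [Finset.mul_sum, smul_eq_mul, ← neg_sub z, inv_neg]
    exact Finset.sum_congr rfl fun i _ => by ring
  rw [hsum, circleIntegral.integral_fun_sum (f := fun i z => (-m i) • ((z - w i)⁻¹ • f z))
    fun i hi => (hf.circleIntegrable_sub_inv_smul (hw i hi)).const_smul, Finset.mul_sum]
  refine Finset.sum_congr rfl fun i hi => ?_
  rw [circleIntegral.integral_smul, hf.circleIntegral_sub_inv_smul (hw i hi), smul_eq_mul,
    smul_eq_mul]
  ring

namespace Matrix

variable {ι R : Type*} [Fintype ι] [DecidableEq ι]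

theorem trace_mul_diagonal_mul_mul [CommSemiring R] (U V B : Matrix ι ι R) (d : ι → R) :
    trace (U * diagonal d * V * B) = ∑ i, d i * (V * B * U) i i := by
  rw [Matrix.mul_assoc, Matrix.mul_assoc, trace_mul_comm, Matrix.mul_assoc]
  simp [trace, diagonal_mul]

theorem mul_diagonal_mul_conjTranspose_sub_smul_one [CommRing R] [StarRing R] {U : Matrix ι ι R}
    (hU : U ∈ unitaryGroup ι R) (d : ι → R) (z : R) :
    U * diagonal d * Uᴴ - z • 1 = U * diagonal (fun i => d i - z) * Uᴴ := by
  have hUU : U * Uᴴ = 1 := mem_unitaryGroup_iff.1 hU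
  rw [← diagonal_sub, Matrix.mul_sub, Matrix.sub_mul, ← smul_one_eq_diagonal,
    Matrix.mul_smul, Matrix.mul_one, Matrix.smul_mul, hUU]

theorem mul_diagonal_mul_conjTranspose_mul_inv_eq_one [Field R] [StarRing R] {U : Matrix ι ι R}
    (hU : U ∈ unitaryGroup ι R) {d : ι → R} (hd : ∀ i, d i ≠ 0) :
    U * diagonal d * Uᴴ * (U * diagonal d⁻¹ * Uᴴ) = 1 := by
  have hUU : Uᴴ * U = 1 := mem_unitaryGroup_iff'.1 hU
  have hUU' : U * Uᴴ = 1 := mem_unitaryGroup_iff.1 hU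
  have hdd : diagonal d * diagonal d⁻¹ = 1 := by
    rw [diagonal_mul_diagonal, ← diagonal_one]
    exact congrArg diagonal (funext fun i => mul_inv_cancel₀ (hd i))
  calc U * diagonal d * Uᴴ * (U * diagonal d⁻¹ * Uᴴ)
      = U * (diagonal d * (Uᴴ * U) * diagonal d⁻¹) * Uᴴ := by simp only [Matrix.mul_assoc]
    _ = 1 := by rw [hUU, Matrix.mul_one, hdd, Matrix.mul_one, hUU']

end Matrix

open Metric in
theorem stmt_7_general {n : ℕ} (A : Matrix (Fin n) (Fin n) ℂ)
    (U : Matrix (Fin n) (Fin n) ℂ) (hU : U ∈ Matrix.unitaryGroup (Fin n) ℂ)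
    (lam : Fin n → ℝ)
    (hdecomp : A = U * Matrix.diagonal (fun i => (lam i : ℂ)) * Uᴴ)
    (c R : ℝ) (hR : 0 < R) (hlam : ∀ i, |lam i - c| < R)
    (B : Matrix (Fin n) (Fin n) ℂ) (f : ℂ → ℂ)
    (hf : ∃ V : Set ℂ, IsOpen V ∧ Metric.closedBall (c : ℂ) R ⊆ V ∧ DifferentiableOn ℂ f V) :
    (∀ z : ℂ, ‖z - (c : ℂ)‖ = R → IsUnit (A - z • (1 : Matrix (Fin n) (Fin n) ℂ))) ∧
    Matrix.trace (U * Matrix.diagonal (fun i => f ((lam i : ℂ))) * Uᴴ * B) =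
      -(1 / (2 * (Real.pi : ℂ) * Complex.I)) *
        (∮ z in C((c : ℂ), R), f z *
          Matrix.trace ((A - z • (1 : Matrix (Fin n) (Fin n) ℂ))⁻¹ * B)) := by
  obtain ⟨V, -, hV, hfV⟩ := hf
  have hf' : DiffContOnCl ℂ f (ball (c : ℂ) R) :=
    (hfV.mono (closure_ball_subset_closedBall.trans hV)).diffContOnCl
  have hball : ∀ i, (lam i : ℂ) ∈ ball (c : ℂ) R := fun i => by
    rw [mem_ball, dist_eq_norm, ← Complex.ofReal_sub, Complex.norm_real, Real.norm_eq_abs]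
    exact hlam i
  have hres : ∀ z : ℂ, A - z • 1 = U * diagonal (fun i => (lam i : ℂ) - z) * Uᴴ := fun z => by
    rw [hdecomp, mul_diagonal_mul_conjTranspose_sub_smul_one hU]
  have hres_inv : ∀ z ∈ sphere (c : ℂ) R,
      (A - z • 1) * (U * diagonal (fun i => ((lam i : ℂ) - z)⁻¹) * Uᴴ) = 1 := fun z hz => by
    rw [hres]
    refine mul_diagonal_mul_conjTranspose_mul_inv_eq_one hU fun i => sub_ne_zero.2 ?_
    rintro rfl
    exact sphere_disjoint_ball.notMem_of_mem_left hz (hball i)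
  refine ⟨fun z hz => (isUnit_iff_isUnit_det _).2 <|
    isUnit_det_of_right_inverse (hres_inv z (mem_sphere_iff_norm.2 hz)), ?_⟩
  have hintegrand : Set.EqOn (fun z => f z * trace ((A - z • 1)⁻¹ * B))
      (fun z => f z * ∑ i, ((lam i : ℂ) - z)⁻¹ * (Uᴴ * B * U) i i) (sphere (c : ℂ) R) :=
    fun z hz => by
      beta_reduce
      rw [inv_eq_right_inv (hres_inv z hz), trace_mul_diagonal_mul_mul]
  rw [circleIntegral.integral_congr hR.le hintegrand,
    circleIntegral_mul_sum_inv_sub _ hf' fun i _ => hball i, trace_mul_diagonal_mul_mul]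
  field_simp [Real.pi_ne_zero, Complex.I_ne_zero]

theorem stmt_7 {n : ℕ} (A : Matrix (Fin n) (Fin n) ℂ) (hA : A.IsHermitian)
    (U : Matrix (Fin n) (Fin n) ℂ) (hU : U ∈ Matrix.unitaryGroup (Fin n) ℂ)
    (lam : Fin n → ℝ)
    (hdecomp : A = U * Matrix.diagonal (fun i => (lam i : ℂ)) * Uᴴ)
    (c R : ℝ) (hR : 0 < R) (hlam : ∀ i, |lam i - c| < R)
    (B : Matrix (Fin n) (Fin n) ℂ) (f : ℂ → ℂ)
    (hf : ∃ V : Set ℂ, IsOpen V ∧ Metric.closedBall (c : ℂ) R ⊆ V ∧ DifferentiableOn ℂ f V) :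
    (∀ z : ℂ, ‖z - (c : ℂ)‖ = R → IsUnit (A - z • (1 : Matrix (Fin n) (Fin n) ℂ))) ∧
    Matrix.trace (U * Matrix.diagonal (fun i => f ((lam i : ℂ))) * Uᴴ * B) =
      -(1 / (2 * (Real.pi : ℂ) * Complex.I)) *
        (∮ z in C((c : ℂ), R), f z *
          Matrix.trace ((A - z • (1 : Matrix (Fin n) (Fin n) ℂ))⁻¹ * B)) :=
  stmt_7_general A U hU lam hdecomp c R hR hlam B f hf
end

section
/- Let H be a probability measure on ℝ, let c > 0, and let m₁, m₂ be nonzero complex numbers with m₁ ≠ m₂ such that for i = 1, 2: 1 + t·mᵢ ≠ 0 for H-almost every t, and the functions t ↦ t/(1 + t·mᵢ) and t ↦ t²/((1 + t·m₁)(1 + t·m₂)) are H-integrable. Define zᵢ = −1/mᵢ + c·∫ t/(1 + t·mᵢ) dH(t) for i = 1, 2. Then c·m₁·m₂·∫ t²/((1 + t·m₁)(1 + t·m₂)) dH(t) = 1 + m₁·m₂·(z₁ − z₂)/(m₂ − m₁). -/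
/-! Subtracting the two inverse Marchenko–Pastur equations, the resolvent identity
`t/(1 + t m₁) - t/(1 + t m₂) = (m₂ - m₁) t²/((1 + t m₁)(1 + t m₂))` turns `z₁ - z₂` into
`(m₁ - m₂)/(m₁ m₂) + c (m₂ - m₁) ∫ t²/((1 + t m₁)(1 + t m₂)) dH`, which rearranges to the claim. -/

open MeasureTheory

theorem div_one_add_mul_sub_div_one_add_mul {K : Type*} [Field K] {a x y : K}
    (hx : 1 + a * x ≠ 0) (hy : 1 + a * y ≠ 0) :
    a / (1 + a * x) - a / (1 + a * y) = (y - x) * (a ^ 2 / ((1 + a * x) * (1 + a * y))) := by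
  field_simp
  ring

theorem integral_div_one_add_mul_sub_integral {α 𝕜 : Type*} [MeasurableSpace α] [RCLike 𝕜]
    {μ : Measure α} {f : α → 𝕜} {x y : 𝕜}
    (hx : ∀ᵐ t ∂μ, 1 + f t * x ≠ 0) (hy : ∀ᵐ t ∂μ, 1 + f t * y ≠ 0)
    (hix : Integrable (fun t => f t / (1 + f t * x)) μ)
    (hiy : Integrable (fun t => f t / (1 + f t * y)) μ) :
    ∫ t, f t / (1 + f t * x) ∂μ - ∫ t, f t / (1 + f t * y) ∂μ =
      (y - x) * ∫ t, f t ^ 2 / ((1 + f t * x) * (1 + f t * y)) ∂μ := by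
  rw [← integral_sub hix hiy, ← integral_const_mul]
  refine integral_congr_ae ?_
  filter_upwards [hx, hy] with t htx hty
  exact div_one_add_mul_sub_div_one_add_mul htx hty

theorem mul_eq_one_add_of_sub_eq_mul {K : Type*} [Field K] {c m₁ m₂ J₁ J₂ I : K}
    (hm₁ : m₁ ≠ 0) (hm₂ : m₂ ≠ 0) (hgap : m₂ - m₁ ≠ 0) (hJ : J₁ - J₂ = (m₂ - m₁) * I) :
    c * m₁ * m₂ * I = 1 + m₁ * m₂ * ((-1 / m₁ + c * J₁) - (-1 / m₂ + c * J₂)) / (m₂ - m₁) := by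
  field_simp
  linear_combination (-c * m₁ * m₂) * hJ

theorem stmt_8_general (H : Measure ℝ) (c : ℝ)
    (m₁ m₂ : ℂ) (hm₁ : m₁ ≠ 0) (hm₂ : m₂ ≠ 0) (hne : m₁ ≠ m₂)
    (h1 : ∀ᵐ (t : ℝ) ∂H, 1 + (t : ℂ) * m₁ ≠ 0) (h2 : ∀ᵐ (t : ℝ) ∂H, 1 + (t : ℂ) * m₂ ≠ 0)
    (hi1 : Integrable (fun t : ℝ => (t : ℂ) / (1 + (t : ℂ) * m₁)) H)
    (hi2 : Integrable (fun t : ℝ => (t : ℂ) / (1 + (t : ℂ) * m₂)) H)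
    (z₁ z₂ : ℂ)
    (hz₁ : z₁ = -1 / m₁ + (c : ℂ) * ∫ (t : ℝ), (t : ℂ) / (1 + (t : ℂ) * m₁) ∂H)
    (hz₂ : z₂ = -1 / m₂ + (c : ℂ) * ∫ (t : ℝ), (t : ℂ) / (1 + (t : ℂ) * m₂) ∂H) :
    (c : ℂ) * m₁ * m₂ * ∫ (t : ℝ), (t : ℂ) ^ 2 / ((1 + (t : ℂ) * m₁) * (1 + (t : ℂ) * m₂)) ∂H =
      1 + m₁ * m₂ * (z₁ - z₂) / (m₂ - m₁) := by
  subst hz₁ hz₂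
  exact mul_eq_one_add_of_sub_eq_mul hm₁ hm₂ (sub_ne_zero.mpr hne.symm)
    (integral_div_one_add_mul_sub_integral h1 h2 hi1 hi2)

theorem stmt_8 (H : Measure ℝ) [IsProbabilityMeasure H] (c : ℝ) (hc : 0 < c)
    (m₁ m₂ : ℂ) (hm₁ : m₁ ≠ 0) (hm₂ : m₂ ≠ 0) (hne : m₁ ≠ m₂)
    (h1 : ∀ᵐ (t : ℝ) ∂H, 1 + (t : ℂ) * m₁ ≠ 0) (h2 : ∀ᵐ (t : ℝ) ∂H, 1 + (t : ℂ) * m₂ ≠ 0)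
    (hi1 : Integrable (fun t : ℝ => (t : ℂ) / (1 + (t : ℂ) * m₁)) H)
    (hi2 : Integrable (fun t : ℝ => (t : ℂ) / (1 + (t : ℂ) * m₂)) H)
    (hi12 : Integrable (fun t : ℝ => (t : ℂ) ^ 2 / ((1 + (t : ℂ) * m₁) * (1 + (t : ℂ) * m₂))) H)
    (z₁ z₂ : ℂ)
    (hz₁ : z₁ = -1 / m₁ + (c : ℂ) * ∫ (t : ℝ), (t : ℂ) / (1 + (t : ℂ) * m₁) ∂H)
    (hz₂ : z₂ = -1 / m₂ + (c : ℂ) * ∫ (t : ℝ), (t : ℂ) / (1 + (t : ℂ) * m₂) ∂H) :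
    (c : ℂ) * m₁ * m₂ * ∫ (t : ℝ), (t : ℂ) ^ 2 / ((1 + (t : ℂ) * m₁) * (1 + (t : ℂ) * m₂)) ∂H =
      1 + m₁ * m₂ * (z₁ - z₂) / (m₂ - m₁) :=
  stmt_8_general H c m₁ m₂ hm₁ hm₂ hne h1 h2 hi1 hi2 z₁ z₂ hz₁ hz₂
end

section
/- Let n, N ≥ 1, let s₁,…,s_N ∈ ℂⁿ, let Σ be any n×n complex matrix, let z ∈ ℂ with Im z ≠ 0, and let b ∈ ℂ be such that Σ̃(z) := z·I − b·Σ is invertible. Set S = Σ_{j=1}^N s_j s_j*, D(z) = S − z·I, D_j(z) = D(z) − s_j s_j*, and β_j(z) = (1 + s_j*·D_j^{-1}(z)·s_j)^{-1}. Then D(z) and every D_j(z) are invertible, every 1 + s_j*·D_j^{-1}(z)·s_j is nonzero, and the exact identity D^{-1}(z) = −Σ̃^{-1}(z) + Σ_{j=1}^N β_j(z)·Σ̃^{-1}(z)·s_j s_j*·D_j^{-1}(z) − b·Σ̃^{-1}(z)·Σ·D^{-1}(z) holds. -/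
open Matrix

/-- The rank-one matrix `v v*`. -/
def rankOne {n : ℕ} (v : Fin n → ℂ) : Matrix (Fin n) (Fin n) ℂ :=
  Matrix.vecMulVec v (star v)

/-!
Write `D = S - z` and `Σ̃ = z - bΣ`. Since `Σ̃ + D = S - bΣ`, the identity
`D⁻¹ + Σ̃⁻¹ = Σ̃⁻¹ (Σ̃ + D) D⁻¹` expresses `D⁻¹` through `Σ̃⁻¹ S D⁻¹ = ∑ⱼ Σ̃⁻¹ sⱼsⱼ* D⁻¹`,
and the Sherman–Morrison formula for `D = Dⱼ + sⱼsⱼ*` turns `sⱼsⱼ* D⁻¹` into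
`βⱼ sⱼsⱼ* Dⱼ⁻¹`. `D` and `Dⱼ` are Hermitian minus a non-real scalar, hence invertible, and the
matrix determinant lemma `det D = det Dⱼ · (1 + sⱼ* Dⱼ⁻¹ sⱼ)` makes `βⱼ` well defined.
-/

namespace Matrix

variable {m : Type*} [Fintype m] [DecidableEq m]

theorem IsHermitian.isUnit_sub_smul_one {𝕜 : Type*} [RCLike 𝕜] {A : Matrix m m 𝕜}
    (hA : A.IsHermitian) {z : 𝕜} (hz : RCLike.im z ≠ 0) : IsUnit (A - z • 1) := by
  have hzA : z ∉ spectrum 𝕜 A := by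
    rw [hA.spectrum_eq_image_range]
    rintro ⟨x, -, rfl⟩
    simp at hz
  rw [spectrum.notMem_iff, Algebra.algebraMap_eq_smul_one] at hzA
  simpa using hzA.neg

theorem det_add_vecMulVec {R : Type*} [CommRing R] {A : Matrix m m R} (hA : IsUnit A.det)
    (u v : m → R) : (A + vecMulVec u v).det = A.det * (1 + v ⬝ᵥ A⁻¹ *ᵥ u) := by
  have hfactor : A + vecMulVec u v = A * (1 + vecMulVec (A⁻¹ *ᵥ u) v) := by
    rw [Matrix.mul_add, Matrix.mul_one, ← mul_vecMulVec, ← Matrix.mul_assoc,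
      mul_nonsing_inv _ hA, Matrix.one_mul]
  rw [hfactor, det_mul, vecMulVec_eq Unit, det_one_add_replicateCol_mul_replicateRow]

theorem one_add_dotProduct_inv_mulVec_ne_zero {R : Type*} [CommRing R] [Nontrivial R]
    {A : Matrix m m R} (hA : IsUnit A.det) {u v : m → R}
    (hB : IsUnit (A + vecMulVec u v).det) : 1 + v ⬝ᵥ A⁻¹ *ᵥ u ≠ 0 := by
  intro h
  rw [det_add_vecMulVec hA, h, mul_zero] at hB
  exact not_isUnit_zero hB

/-- The row form of the Sherman–Morrison formula. -/
theorem vecMulVec_mul_inv_add_vecMulVec {K : Type*} [Field K] {A : Matrix m m K}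
    (hA : IsUnit A.det) {u v : m → K} (hB : IsUnit (A + vecMulVec u v).det) :
    vecMulVec u v * (A + vecMulVec u v)⁻¹ =
      (1 + v ⬝ᵥ A⁻¹ *ᵥ u)⁻¹ • (vecMulVec u v * A⁻¹) := by
  have hcancel : vecMulVec u v * A⁻¹ * (A + vecMulVec u v) =
      (1 + v ⬝ᵥ A⁻¹ *ᵥ u) • vecMulVec u v := by
    rw [Matrix.mul_add, Matrix.mul_assoc, nonsing_inv_mul _ hA, Matrix.mul_one, vecMulVec_mul,
      vecMulVec_mul_vecMulVec, ← dotProduct_mulVec, vecMulVec_smul, add_smul, one_smul]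
  rw [eq_inv_smul_iff₀ (one_add_dotProduct_inv_mulVec_ne_zero hA hB), ← Matrix.smul_mul,
    ← hcancel, mul_nonsing_inv_cancel_right _ _ hB]

end Matrix

theorem isHermitian_rankOne {n : ℕ} (v : Fin n → ℂ) : (rankOne v).IsHermitian := by
  rw [rankOne, IsHermitian, conjTranspose_vecMulVec, star_star]

theorem isHermitian_sum_rankOne {n N : ℕ} (s : Fin N → Fin n → ℂ) :
    (∑ j, rankOne (s j)).IsHermitian :=
  isSelfAdjoint_sum _ fun j _ => isHermitian_rankOne (s j)

theorem stmt_12_general {n N : ℕ}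
    (s : Fin N → Fin n → ℂ) (Sig : Matrix (Fin n) (Fin n) ℂ)
    (z b : ℂ) (hz : z.im ≠ 0)
    (hinv : IsUnit (z • (1 : Matrix (Fin n) (Fin n) ℂ) - b • Sig)) :
    IsUnit ((∑ j, rankOne (s j)) - z • (1 : Matrix (Fin n) (Fin n) ℂ)) ∧
    (∀ j, IsUnit ((∑ k, rankOne (s k)) - rankOne (s j) -
      z • (1 : Matrix (Fin n) (Fin n) ℂ))) ∧
    (∀ j, 1 + star (s j) ⬝ᵥ (((∑ k, rankOne (s k)) - rankOne (s j) -
      z • (1 : Matrix (Fin n) (Fin n) ℂ))⁻¹).mulVec (s j) ≠ 0) ∧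
    ((∑ j, rankOne (s j)) - z • (1 : Matrix (Fin n) (Fin n) ℂ))⁻¹ =
      -(z • (1 : Matrix (Fin n) (Fin n) ℂ) - b • Sig)⁻¹ +
      (∑ j, (1 + star (s j) ⬝ᵥ (((∑ k, rankOne (s k)) - rankOne (s j) -
            z • (1 : Matrix (Fin n) (Fin n) ℂ))⁻¹).mulVec (s j))⁻¹ •
          ((z • (1 : Matrix (Fin n) (Fin n) ℂ) - b • Sig)⁻¹ * rankOne (s j) *
            ((∑ k, rankOne (s k)) - rankOne (s j) -
              z • (1 : Matrix (Fin n) (Fin n) ℂ))⁻¹)) -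
      b • ((z • (1 : Matrix (Fin n) (Fin n) ℂ) - b • Sig)⁻¹ * Sig *
        ((∑ j, rankOne (s j)) - z • (1 : Matrix (Fin n) (Fin n) ℂ))⁻¹) := by
  set S := ∑ j, rankOne (s j)
  set T := z • (1 : Matrix (Fin n) (Fin n) ℂ) - b • Sig
  have hD : IsUnit (S - z • 1) := (isHermitian_sum_rankOne s).isUnit_sub_smul_one hz
  have hDj (j : Fin N) : IsUnit (S - rankOne (s j) - z • 1) :=
    ((isHermitian_sum_rankOne s).sub (isHermitian_rankOne (s j))).isUnit_sub_smul_one hz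
  have hDj_det (j : Fin N) : IsUnit (S - rankOne (s j) - z • 1).det :=
    (isUnit_iff_isUnit_det _).1 (hDj j)
  have hsplit (j : Fin N) : S - z • 1 = (S - rankOne (s j) - z • 1) + rankOne (s j) := by abel
  have hDsplit (j : Fin N) : IsUnit (S - rankOne (s j) - z • 1 + rankOne (s j)).det := by
    rwa [← hsplit j, ← isUnit_iff_isUnit_det]
  have hrow (j : Fin N) : rankOne (s j) * (S - z • 1)⁻¹ =
      (1 + star (s j) ⬝ᵥ (S - rankOne (s j) - z • 1)⁻¹ *ᵥ s j)⁻¹ •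
        (rankOne (s j) * (S - rankOne (s j) - z • 1)⁻¹) := by
    rw [hsplit j, rankOne]
    exact vecMulVec_mul_inv_add_vecMulVec (hDj_det j) (hDsplit j)
  refine ⟨hD, hDj, fun j => one_add_dotProduct_inv_mulVec_ne_zero (hDj_det j) (hDsplit j), ?_⟩
  calc (S - z • 1)⁻¹ = -T⁻¹ + (T⁻¹ + (S - z • 1)⁻¹) := (neg_add_cancel_left _ _).symm
    _ = -T⁻¹ + T⁻¹ * (S - b • Sig) * (S - z • 1)⁻¹ := by
      rw [inv_add_inv (iff_of_true hinv hD), sub_add_sub_cancel']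
    _ = _ := by
      rw [Matrix.mul_sub, Matrix.sub_mul, Finset.mul_sum, Finset.sum_mul, mul_smul_comm,
        Matrix.smul_mul, add_sub_assoc]
      congr 2
      refine Finset.sum_congr rfl fun j _ => ?_
      rw [Matrix.mul_assoc, hrow j, mul_smul_comm, Matrix.mul_assoc]

theorem stmt_12 {n N : ℕ} (hn : 0 < n) (hN : 0 < N)
    (s : Fin N → Fin n → ℂ) (Sig : Matrix (Fin n) (Fin n) ℂ)
    (z b : ℂ) (hz : z.im ≠ 0)
    (hinv : IsUnit (z • (1 : Matrix (Fin n) (Fin n) ℂ) - b • Sig)) :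
    IsUnit ((∑ j, rankOne (s j)) - z • (1 : Matrix (Fin n) (Fin n) ℂ)) ∧
    (∀ j, IsUnit ((∑ k, rankOne (s k)) - rankOne (s j) -
      z • (1 : Matrix (Fin n) (Fin n) ℂ))) ∧
    (∀ j, 1 + star (s j) ⬝ᵥ (((∑ k, rankOne (s k)) - rankOne (s j) -
      z • (1 : Matrix (Fin n) (Fin n) ℂ))⁻¹).mulVec (s j) ≠ 0) ∧
    ((∑ j, rankOne (s j)) - z • (1 : Matrix (Fin n) (Fin n) ℂ))⁻¹ =
      -(z • (1 : Matrix (Fin n) (Fin n) ℂ) - b • Sig)⁻¹ +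
      (∑ j, (1 + star (s j) ⬝ᵥ (((∑ k, rankOne (s k)) - rankOne (s j) -
            z • (1 : Matrix (Fin n) (Fin n) ℂ))⁻¹).mulVec (s j))⁻¹ •
          ((z • (1 : Matrix (Fin n) (Fin n) ℂ) - b • Sig)⁻¹ * rankOne (s j) *
            ((∑ k, rankOne (s k)) - rankOne (s j) -
              z • (1 : Matrix (Fin n) (Fin n) ℂ))⁻¹)) -
      b • ((z • (1 : Matrix (Fin n) (Fin n) ℂ) - b • Sig)⁻¹ * Sig *
        ((∑ j, rankOne (s j)) - z • (1 : Matrix (Fin n) (Fin n) ℂ))⁻¹) :=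
  stmt_12_general s Sig z b hz hinv
end

section
/- Let A be an n×n Hermitian complex matrix, s ∈ ℂⁿ, z ∈ ℂ with v = Im z > 0, and let M be any n×n complex matrix. Then (with both resolvents existing since Im z > 0) | tr( ((A + s s* − z·I)^{-1} − (A − z·I)^{-1})·M ) | ≤ ‖M‖ / v. -/
open Matrix

/-- The operator (spectral) norm of a square complex matrix. -/
noncomputable def opNorm {n : ℕ} (M : Matrix (Fin n) (Fin n) ℂ) : ℝ :=
  ‖LinearMap.toContinuousLinearMap (Matrix.toEuclideanLin M)‖

/-!
Write `R = (A - z)⁻¹`, `R' = (A + s s* - z)⁻¹` and `w = s* R s`. The resolvent identity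
`R' - R = -R' (s s*) R` turns the trace into `-⟪R* s, M R' s⟫`, and Sherman–Morrison gives
`(1 + w) R' s = R s`. Because `A` is Hermitian, `Im w = Im z ‖R s‖²` and `‖R* s‖ = ‖R s‖`, so the
trace is at most `‖M‖ ‖R s‖² / |1 + w| = ‖M‖ Im w / (Im z |1 + w|) ≤ ‖M‖ / Im z`.
-/

namespace Matrix

variable {ι : Type*}

theorem IsHermitian.conjTranspose_sub_smul_one [DecidableEq ι] {H : Matrix ι ι ℂ}
    (hH : H.IsHermitian) (z : ℂ) : (H - z • 1)ᴴ = H - star z • 1 := by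
  rw [conjTranspose_sub, hH.eq, conjTranspose_smul, conjTranspose_one]

variable [Fintype ι]

theorem star_dotProduct_self_eq_norm_sq (u : ι → ℂ) :
    star u ⬝ᵥ u = (‖WithLp.toLp 2 u‖ : ℂ) ^ 2 := by
  rw [dotProduct_comm, ← EuclideanSpace.inner_toLp_toLp, inner_self_eq_norm_sq_to_K]
  rfl

theorem trace_vecMulVec_mul {R : Type*} [CommSemiring R] (a b : ι → R) (X : Matrix ι ι R) :
    trace (vecMulVec a b * X) = b ⬝ᵥ X *ᵥ a := by
  rw [vecMulVec_mul, trace_vecMulVec, dotProduct_comm, dotProduct_mulVec]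

variable [DecidableEq ι] {R : Type*} [CommRing R] {B : Matrix ι ι R} {a b : ι → R}

theorem trace_inv_add_vecMulVec_sub_inv_mul (hB : IsUnit B) (hB' : IsUnit (B + vecMulVec a b))
    (X : Matrix ι ι R) :
    trace (((B + vecMulVec a b)⁻¹ - B⁻¹) * X) =
      -(b ⬝ᵥ B⁻¹ *ᵥ X *ᵥ (B + vecMulVec a b)⁻¹ *ᵥ a) := by
  rw [inv_sub_inv ⟨fun _ => hB, fun _ => hB'⟩, sub_add_cancel_left, Matrix.mul_neg,
    Matrix.neg_mul, Matrix.neg_mul, trace_neg, Matrix.mul_assoc, Matrix.mul_assoc, trace_mul_comm,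
    Matrix.mul_assoc, Matrix.mul_assoc, trace_vecMulVec_mul, ← mulVec_mulVec, ← mulVec_mulVec]

theorem smul_inv_add_vecMulVec_mulVec (hB : IsUnit B) (hB' : IsUnit (B + vecMulVec a b)) :
    (1 + b ⬝ᵥ B⁻¹ *ᵥ a) • ((B + vecMulVec a b)⁻¹ *ᵥ a) = B⁻¹ *ᵥ a := by
  have hBB' : (B + vecMulVec a b) *ᵥ B⁻¹ *ᵥ a = (1 + b ⬝ᵥ B⁻¹ *ᵥ a) • a := by
    rw [add_mulVec, mulVec_mulVec, mul_nonsing_inv _ ((isUnit_iff_isUnit_det B).mp hB),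
      one_mulVec, vecMulVec_mulVec, op_smul_eq_smul, add_smul, one_smul]
  rw [← mulVec_smul, ← hBB', mulVec_mulVec,
    nonsing_inv_mul _ ((isUnit_iff_isUnit_det _).mp hB'), one_mulVec]

namespace IsHermitian

variable {H : Matrix ι ι ℂ}

theorem im_star_sub_smul_one_mulVec_dotProduct (hH : H.IsHermitian) (z : ℂ) (u : ι → ℂ) :
    (star ((H - z • 1) *ᵥ u) ⬝ᵥ u).im = z.im * ‖WithLp.toLp 2 u‖ ^ 2 := by
  have hreal : (star u ⬝ᵥ H *ᵥ u).im = 0 := hH.im_star_dotProduct_mulVec_self u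
  rw [star_mulVec, ← dotProduct_mulVec, hH.conjTranspose_sub_smul_one, sub_mulVec, smul_mulVec,
    one_mulVec, dotProduct_sub, dotProduct_smul, star_dotProduct_self_eq_norm_sq,
    ← Complex.ofReal_pow]
  simp [hreal, -Complex.ofReal_pow]

theorem isUnit_sub_smul_one_s14 (hH : H.IsHermitian) {z : ℂ} (hz : z.im ≠ 0) :
    IsUnit (H - z • 1) := by
  refine mulVec_injective_iff_isUnit.mp fun x y hxy => ?_
  have h := hH.im_star_sub_smul_one_mulVec_dotProduct z (x - y)
  rw [mulVec_sub, hxy, sub_self, star_zero, zero_dotProduct, Complex.zero_im, eq_comm,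
    mul_eq_zero, or_iff_right hz, sq_eq_zero_iff, norm_eq_zero, WithLp.toLp_eq_zero] at h
  exact sub_eq_zero.mp h

theorem im_star_dotProduct_inv_sub_smul_one_mulVec (hH : H.IsHermitian) {z : ℂ}
    (hz : z.im ≠ 0) (s : ι → ℂ) :
    (star s ⬝ᵥ (H - z • 1)⁻¹ *ᵥ s).im = z.im * ‖WithLp.toLp 2 ((H - z • 1)⁻¹ *ᵥ s)‖ ^ 2 := by
  have hdet := (isUnit_iff_isUnit_det _).mp (hH.isUnit_sub_smul_one_s14 hz)
  have hs : (H - z • 1) *ᵥ (H - z • 1)⁻¹ *ᵥ s = s := by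
    rw [mulVec_mulVec, mul_nonsing_inv _ hdet, one_mulVec]
  nth_rewrite 1 [← hs]
  exact hH.im_star_sub_smul_one_mulVec_dotProduct z _

theorem norm_conjTranspose_inv_sub_smul_one_mulVec (hH : H.IsHermitian) {z : ℂ}
    (hz : z.im ≠ 0) (s : ι → ℂ) :
    ‖WithLp.toLp 2 ((H - z • 1)⁻¹ᴴ *ᵥ s)‖ = ‖WithLp.toLp 2 ((H - z • 1)⁻¹ *ᵥ s)‖ := by
  have hstar : star s ⬝ᵥ (H - z • 1)⁻¹ᴴ *ᵥ s = star (star s ⬝ᵥ (H - z • 1)⁻¹ *ᵥ s) := by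
    rw [star_dotProduct, star_mulVec, ← dotProduct_mulVec, conjTranspose_conjTranspose]
  have h := hH.im_star_dotProduct_inv_sub_smul_one_mulVec (z := star z) (by simpa using hz) s
  rw [← hH.conjTranspose_sub_smul_one, ← conjTranspose_nonsing_inv, hstar, Complex.star_def,
    Complex.conj_im, Complex.conj_im, hH.im_star_dotProduct_inv_sub_smul_one_mulVec hz s,
    neg_mul, neg_inj] at h
  exact (pow_left_inj₀ (norm_nonneg _) (norm_nonneg _) two_ne_zero).mp
    (mul_left_cancel₀ hz h).symm

end IsHermitian

end Matrix

theorem norm_star_dotProduct_mulVec_le {n : ℕ} (M : Matrix (Fin n) (Fin n) ℂ) (a b : Fin n → ℂ) :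
    ‖star a ⬝ᵥ M *ᵥ b‖ ≤ ‖WithLp.toLp 2 a‖ * (opNorm M * ‖WithLp.toLp 2 b‖) := by
  have hinner :
      star a ⬝ᵥ M *ᵥ b = inner ℂ (WithLp.toLp 2 a) (toEuclideanLin M (WithLp.toLp 2 b)) := by
    rw [toLpLin_toLp, toLin'_apply, EuclideanSpace.inner_toLp_toLp, dotProduct_comm]
  rw [hinner]
  exact (norm_inner_le_norm _ _).trans (mul_le_mul_of_nonneg_left
    ((LinearMap.toContinuousLinearMap (toEuclideanLin M)).le_opNorm _) (norm_nonneg _))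

theorem mul_le_inv_of_im_eq_mul_sq {v : ℝ} (hv : 0 < v) {w : ℂ} {a c : ℝ} (hc : 0 ≤ c)
    (hw : w.im = v * a ^ 2) (ha : ‖1 + w‖ * c = a) : a * c ≤ v⁻¹ := by
  rcases (ha ▸ mul_nonneg (norm_nonneg _) hc : 0 ≤ a).eq_or_lt with rfl | ha0
  · simpa using hv.le
  have hN : 0 < ‖1 + w‖ := pos_of_mul_pos_left (ha ▸ ha0) hc
  have him : w.im ≤ ‖1 + w‖ := by
    simpa using (Complex.im_le_norm (1 + w))
  have hvac : v * (a * c) * ‖1 + w‖ ≤ 1 * ‖1 + w‖ :=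
    calc v * (a * c) * ‖1 + w‖ = v * a * (‖1 + w‖ * c) := by ring
      _ = w.im := by rw [ha, hw]; ring
      _ ≤ 1 * ‖1 + w‖ := by rwa [one_mul]
  rw [← one_div, le_div_iff₀' hv]
  exact le_of_mul_le_mul_right hvac hN

theorem stmt_14 {n : ℕ} (A : Matrix (Fin n) (Fin n) ℂ) (hA : A.IsHermitian)
    (s : Fin n → ℂ) (z : ℂ) (hz : 0 < z.im) (M : Matrix (Fin n) (Fin n) ℂ) :
    ‖Matrix.trace (((A + Matrix.vecMulVec s (star s) -
        z • (1 : Matrix (Fin n) (Fin n) ℂ))⁻¹ -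
      (A - z • (1 : Matrix (Fin n) (Fin n) ℂ))⁻¹) * M)‖ ≤ opNorm M / z.im := by
  have hv : z.im ≠ 0 := hz.ne'
  have hA' : (A + vecMulVec s (star s)).IsHermitian :=
    hA.add (by rw [IsHermitian, conjTranspose_vecMulVec, star_star])
  have hB := hA.isUnit_sub_smul_one_s14 hv
  have hB' := hA'.isUnit_sub_smul_one_s14 hv
  rw [add_sub_right_comm] at hB' ⊢
  set R := (A - z • (1 : Matrix (Fin n) (Fin n) ℂ))⁻¹
  set R' := (A - z • (1 : Matrix (Fin n) (Fin n) ℂ) + vecMulVec s (star s))⁻¹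
  have hR's :
      ‖1 + star s ⬝ᵥ R *ᵥ s‖ * ‖WithLp.toLp 2 (R' *ᵥ s)‖ = ‖WithLp.toLp 2 (R *ᵥ s)‖ := by
    rw [← norm_smul, ← WithLp.toLp_smul, smul_inv_add_vecMulVec_mulVec hB hB']
  have hadj : ∀ y, star s ⬝ᵥ R *ᵥ y = star (Rᴴ *ᵥ s) ⬝ᵥ y := fun y => by
    rw [star_mulVec, conjTranspose_conjTranspose, dotProduct_mulVec]
  rw [trace_inv_add_vecMulVec_sub_inv_mul hB hB', norm_neg, hadj]
  calc _ ≤ ‖WithLp.toLp 2 (Rᴴ *ᵥ s)‖ * (opNorm M * ‖WithLp.toLp 2 (R' *ᵥ s)‖) :=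
        norm_star_dotProduct_mulVec_le M _ _
    _ = opNorm M * (‖WithLp.toLp 2 (R *ᵥ s)‖ * ‖WithLp.toLp 2 (R' *ᵥ s)‖) := by
        rw [hA.norm_conjTranspose_inv_sub_smul_one_mulVec hv]; ring
    _ ≤ opNorm M * z.im⁻¹ :=
        mul_le_mul_of_nonneg_left (mul_le_inv_of_im_eq_mul_sq hz (norm_nonneg _)
          (hA.im_star_dotProduct_inv_sub_smul_one_mulVec hv s) hR's) (norm_nonneg _)
    _ = opNorm M / z.im := (div_eq_mul_inv _ _).symm
end

section
/- Let A be an n×n Hermitian positive semidefinite complex matrix, s ∈ ℂⁿ, and z ∈ ℂ with v = Im z > 0. Then |1 + s*·(A − z·I)^{-1}·s| ≥ v/|z|; equivalently, | (1 + s*·(A − z·I)^{-1}·s)^{-1} | ≤ |z|/v. -/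
open Matrix
open scoped ComplexOrder

/-!
With `u = (A - z I)⁻¹ s` we have `s* u = u* A u - z̄ ‖u‖²`, so
`z (1 + s* u) = z (1 + u* A u) - |z|² ‖u‖²`. Since `u* A u ≥ 0` and `|z|² ‖u‖²` is real, the
imaginary part of this product is `Im z · (1 + u* A u) ≥ Im z`, whence `|z| |1 + s* u| ≥ Im z`.
-/

namespace Matrix

theorem IsHermitian.star_sub_smul_one_mulVec_dotProduct {n R : Type*} [Fintype n] [DecidableEq n]
    [CommRing R] [StarRing R] {A : Matrix n n R} (hA : A.IsHermitian) (c : R) (u : n → R) :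
    star ((A - c • 1) *ᵥ u) ⬝ᵥ u = star u ⬝ᵥ A *ᵥ u - star c * (star u ⬝ᵥ u) := by
  rw [star_mulVec, ← dotProduct_mulVec, conjTranspose_sub, conjTranspose_smul, conjTranspose_one,
    hA.eq, sub_mulVec, smul_mulVec, one_mulVec, dotProduct_sub, dotProduct_smul, smul_eq_mul]

theorem IsHermitian.isUnit_det_sub_smul_one {n : Type*} [Fintype n] [DecidableEq n]
    {A : Matrix n n ℂ} (hA : A.IsHermitian) {z : ℂ} (hz : z.im ≠ 0) :
    IsUnit (A - z • 1).det := by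
  rw [isUnit_iff_ne_zero]
  intro hdet
  obtain ⟨v, hv, hker⟩ := exists_mulVec_eq_zero_iff.2 hdet
  have hform := hA.star_sub_smul_one_mulVec_dotProduct z v
  rw [hker, star_zero, zero_dotProduct] at hform
  have hquad : (star v ⬝ᵥ A *ᵥ v).im = 0 := hA.im_star_dotProduct_mulVec_self v
  obtain ⟨-, hnorm_im⟩ := Complex.le_def.1 (dotProduct_star_self_nonneg v)
  have hnorm_re : (star v ⬝ᵥ v).re = 0 := by
    have := congrArg Complex.im hform
    simp only [Complex.zero_im, Complex.sub_im, Complex.mul_im, hquad, ← hnorm_im,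
      Complex.star_def, Complex.conj_im, Complex.conj_re] at this
    simpa [hz] using this
  exact hv (dotProduct_star_self_eq_zero.1 (Complex.ext hnorm_re hnorm_im.symm))

end Matrix

theorem Complex.im_le_im_mul_one_add_sub_star_mul {z a r : ℂ} (hz : 0 ≤ z.im) (ha : 0 ≤ a)
    (hr : r.im = 0) : z.im ≤ (z * (1 + (a - star z * r))).im := by
  obtain ⟨ha_re, ha_im⟩ := Complex.le_def.1 ha
  simp only [Complex.zero_re, Complex.zero_im] at ha_re ha_im
  have : (z * (1 + (a - star z * r))).im = z.im * (1 + a.re) := by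
    simp only [Complex.mul_im, Complex.add_im, Complex.add_re, Complex.sub_re, Complex.sub_im,
      Complex.mul_re, Complex.one_re, Complex.one_im, Complex.star_def, Complex.conj_re,
      Complex.conj_im, hr, ← ha_im]
    ring
  rw [this]
  nlinarith

theorem Matrix.PosSemidef.im_le_im_mul_one_add_star_sub_smul_one_mulVec_dotProduct
    {n : Type*} [Fintype n] [DecidableEq n] {A : Matrix n n ℂ} (hA : A.PosSemidef) {z : ℂ}
    (hz : 0 ≤ z.im) (u : n → ℂ) :
    z.im ≤ (z * (1 + star ((A - z • 1) *ᵥ u) ⬝ᵥ u)).im := by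
  rw [hA.isHermitian.star_sub_smul_one_mulVec_dotProduct]
  exact Complex.im_le_im_mul_one_add_sub_star_mul hz (hA.dotProduct_mulVec_nonneg u)
    (Complex.le_def.1 (dotProduct_star_self_nonneg u)).2.symm

theorem stmt_15 {n : ℕ} (A : Matrix (Fin n) (Fin n) ℂ) (hA : A.PosSemidef)
    (s : Fin n → ℂ) (z : ℂ) (hz : 0 < z.im) :
    z.im / ‖z‖ ≤
      ‖1 + star s ⬝ᵥ ((A - z • (1 : Matrix (Fin n) (Fin n) ℂ))⁻¹).mulVec s‖ ∧
    ‖(1 + star s ⬝ᵥ ((A - z • (1 : Matrix (Fin n) (Fin n) ℂ))⁻¹).mulVec s)⁻¹‖ ≤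
      ‖z‖ / z.im := by
  set w := star s ⬝ᵥ (A - z • 1)⁻¹ *ᵥ s
  have hdet := hA.isHermitian.isUnit_det_sub_smul_one hz.ne'
  have hsolve : (A - z • 1) *ᵥ (A - z • 1)⁻¹ *ᵥ s = s := by
    rw [mulVec_mulVec, mul_nonsing_inv _ hdet, one_mulVec]
  have hprod : z.im ≤ ‖z‖ * ‖1 + w‖ := calc
    z.im ≤ (z * (1 + w)).im := by
      have h := hA.im_le_im_mul_one_add_star_sub_smul_one_mulVec_dotProduct hz.le
        ((A - z • 1)⁻¹ *ᵥ s)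
      rwa [hsolve] at h
    _ ≤ ‖z * (1 + w)‖ := Complex.im_le_norm _
    _ = ‖z‖ * ‖1 + w‖ := norm_mul _ _
  have hnorm : 0 < ‖z‖ := norm_pos_iff.2 fun h ↦ by simp [h] at hz
  have hlower : z.im / ‖z‖ ≤ ‖1 + w‖ := (div_le_iff₀' hnorm).2 hprod
  refine ⟨hlower, ?_⟩
  rw [norm_inv, ← inv_div]
  exact inv_anti₀ (div_pos hz hnorm) hlower
end

section
/- For every n×n complex matrix M, Σ_{i=1}^n |Mᵢᵢ| ≤ ‖M‖ · rank(M), where Mᵢᵢ denotes the (i,i) entry of M, ‖M‖ the operator (spectral) norm, and rank(M) the rank of M. -/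
/-!
Multiplying `A` on the left by the diagonal matrix of phases `conj (A i i) / ‖A i i‖` turns
`∑ i, ‖A i i‖` into the trace of a matrix whose norm and rank are at most those of `A`.
The trace of an operator `T` is the trace of its restriction to `range T`; in an orthonormal
basis `u` of that range it is a sum of `rank T` terms `⟪u k, T (u k)⟫`, each of norm at most `‖T‖`.
-/

open Matrix

open scoped InnerProductSpace Matrix.Norms.L2Operator

theorem ContinuousLinearMap.norm_trace_le_opNorm_mul_finrank_range {𝕜 E : Type*} [RCLike 𝕜]
    [NormedAddCommGroup E] [InnerProductSpace 𝕜 E] [FiniteDimensional 𝕜 E] (T : E →L[𝕜] E) :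
    ‖LinearMap.trace 𝕜 E T‖ ≤ ‖T‖ * Module.finrank 𝕜 (LinearMap.range (T : E →ₗ[𝕜] E)) := by
  set K := LinearMap.range (T : E →ₗ[𝕜] E)
  let u := stdOrthonormalBasis 𝕜 K
  rw [← LinearMap.trace_restrict_eq_of_forall_mem K _ (LinearMap.mem_range_self _),
    LinearMap.trace_eq_sum_inner _ u]
  calc _ ≤ ∑ _k, ‖T‖ := norm_sum_le_of_le _ fun k _ => ?_
    _ = _ := by simp [mul_comm]
  have hu : ‖(u k : E)‖ = 1 := u.orthonormal.1 k
  calc ‖⟪(u k : E), T (u k)⟫_𝕜‖ ≤ ‖(u k : E)‖ * ‖T (u k)‖ := norm_inner_le_norm _ _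
    _ ≤ ‖T‖ := by simpa [hu] using T.le_opNorm (u k)

namespace Matrix

variable {𝕜 ι : Type*} [RCLike 𝕜] [Fintype ι] [DecidableEq ι]

theorem norm_trace_le_l2_opNorm_mul_rank (A : Matrix ι ι 𝕜) : ‖A.trace‖ ≤ ‖A‖ * A.rank := by
  have h := (toEuclideanCLM (n := ι) (𝕜 := 𝕜) A).norm_trace_le_opNorm_mul_finrank_range
  have hlin : (toEuclideanCLM (n := ι) (𝕜 := 𝕜) A : EuclideanSpace 𝕜 ι →ₗ[𝕜] EuclideanSpace 𝕜 ι) =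
      toLin (PiLp.basisFun 2 𝕜 ι) (PiLp.basisFun 2 𝕜 ι) A := rfl
  rwa [hlin, trace_toLin_eq, ← rank_eq_finrank_range_toLin] at h

theorem norm_sum_mul_diag_le_l2_opNorm_mul_rank (A : Matrix ι ι 𝕜) {θ : ι → 𝕜}
    (hθ : ∀ i, ‖θ i‖ ≤ 1) : ‖∑ i, θ i * A i i‖ ≤ ‖A‖ * A.rank := by
  have hdiag : ‖diagonal θ‖ ≤ 1 := by
    rw [l2_opNorm_diagonal]; exact pi_norm_le_iff_of_nonneg zero_le_one |>.2 hθ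
  calc ‖∑ i, θ i * A i i‖ = ‖(diagonal θ * A).trace‖ := by simp [trace, diagonal_mul]
    _ ≤ ‖diagonal θ * A‖ * (diagonal θ * A).rank := norm_trace_le_l2_opNorm_mul_rank _
    _ ≤ ‖A‖ * A.rank := by
      gcongr
      · calc ‖diagonal θ * A‖ ≤ ‖diagonal θ‖ * ‖A‖ := norm_mul_le _ _
          _ ≤ ‖A‖ := mul_le_of_le_one_left (norm_nonneg _) hdiag
      · exact rank_mul_le_right _ _

theorem sum_norm_diag_le_l2_opNorm_mul_rank (A : Matrix ι ι 𝕜) :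
    ∑ i, ‖A i i‖ ≤ ‖A‖ * A.rank := by
  -- the phase of `A i i`, with `θ i = 0` when `A i i = 0`
  let θ i := star (A i i) / ‖A i i‖
  have hθ : ∀ i, θ i * A i i = ‖A i i‖ := fun i => by
    rw [div_mul_eq_mul_div, RCLike.star_def, RCLike.conj_mul, sq, mul_self_div_self]
  calc ∑ i, ‖A i i‖ = RCLike.re (∑ i, θ i * A i i) := by simp [hθ]
    _ ≤ ‖∑ i, θ i * A i i‖ := RCLike.re_le_norm _
    _ ≤ ‖A‖ * A.rank := norm_sum_mul_diag_le_l2_opNorm_mul_rank A fun i => by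
      simp only [θ, norm_div, RCLike.norm_ofReal, abs_norm, norm_star]
      exact div_self_le_one _

end Matrix

theorem stmt_17 {n : ℕ} (M : Matrix (Fin n) (Fin n) ℂ) :
    ∑ i, ‖M i i‖ ≤ opNorm M * (M.rank : ℝ) :=
  M.sum_norm_diag_le_l2_opNorm_mul_rank
end

section
/- For every n×n complex matrix M and every real p ≥ 1, Σ_{i=1}^n |Mᵢᵢ|^p ≤ Σ_{i=1}^n sᵢ(M)^p, where Mᵢᵢ denotes the (i,i) entry of M and s₁(M),…,sₙ(M) are the singular values of M. -/
open Matrix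

/-- The singular values of a square complex matrix: the square roots of the eigenvalues of
`Mᴴ * M`. -/
noncomputable def singularValues {n : ℕ} (M : Matrix (Fin n) (Fin n) ℂ) : Fin n → ℝ :=
  fun i => Real.sqrt ((Matrix.isHermitian_conjTranspose_mul_self M).eigenvalues i)

/-!
Diagonalising `Mᴴ M = V diag(s²) Vᴴ` with `V` unitary writes `M = U diag(s) Vᴴ`, where
`U = M V diag(s)⁻¹` is a partial isometry. Then `|Mᵢᵢ| ≤ ∑ₖ Dᵢₖ sₖ` with `Dᵢₖ = |Uᵢₖ| |Vᵢₖ|`, and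
by Cauchy–Schwarz `D` is doubly substochastic, because the rows and columns of the partial
isometries `U` and `V` have norm at most one. Jensen's inequality for the convex function `x ↦ xᵖ`
in each row, followed by summation over the columns, gives `∑ᵢ |Mᵢᵢ|ᵖ ≤ ∑ₖ sₖᵖ`.
-/

open Finset
open scoped ComplexOrder

/-- The missing mass `1 - ∑ wᵢ` is put on the point `0`. -/
lemma ConvexOn.map_sum_le_of_sum_le_one {ι E : Type*} [AddCommGroup E] [Module ℝ E] {s : Set E}
    {f : E → ℝ} (hf : ConvexOn ℝ s f) (h0 : (0 : E) ∈ s) (hf0 : f 0 ≤ 0) {t : Finset ι}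
    {w : ι → ℝ} {x : ι → E} (hw : ∀ i ∈ t, 0 ≤ w i) (hw1 : ∑ i ∈ t, w i ≤ 1)
    (hx : ∀ i ∈ t, x i ∈ s) :
    f (∑ i ∈ t, w i • x i) ≤ ∑ i ∈ t, w i • f (x i) := by
  have hv : 0 ≤ 1 - ∑ i ∈ t, w i := sub_nonneg.2 hw1
  have h := hf.map_add_sum_le hw (sub_add_cancel 1 _) hx hv h0
  rw [smul_zero, zero_add] at h
  exact h.trans (add_le_of_nonpos_left (smul_nonpos_of_nonneg_of_nonpos hv hf0))

theorem sum_rpow_sum_mul_le_sum_rpow {m k : Type*} [Fintype m] [Fintype k] {D : m → k → ℝ}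
    (hD : ∀ i j, 0 ≤ D i j) (hrow : ∀ i, ∑ j, D i j ≤ 1) (hcol : ∀ j, ∑ i, D i j ≤ 1)
    {x : k → ℝ} (hx : ∀ j, 0 ≤ x j) {p : ℝ} (hp : 1 ≤ p) :
    ∑ i, (∑ j, D i j * x j) ^ p ≤ ∑ j, x j ^ p := by
  have hjensen (i : m) : (∑ j, D i j * x j) ^ p ≤ ∑ j, D i j * x j ^ p :=
    (convexOn_rpow hp).map_sum_le_of_sum_le_one Set.self_mem_Ici
      (by rw [Real.zero_rpow (by linarith)]) (fun j _ => hD i j) (hrow i) (fun j _ => hx j)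
  calc ∑ i, (∑ j, D i j * x j) ^ p ≤ ∑ i, ∑ j, D i j * x j ^ p := sum_le_sum fun i _ => hjensen i
    _ = ∑ j, (∑ i, D i j) * x j ^ p := by rw [sum_comm]; simp only [sum_mul]
    _ ≤ ∑ j, x j ^ p := sum_le_sum fun j _ =>
      mul_le_of_le_one_left (Real.rpow_nonneg (hx j) p) (hcol j)

namespace Matrix

variable {𝕜 : Type*} [RCLike 𝕜] {m n : Type*} [Fintype n]

lemma mul_conjTranspose_self_apply_self (A : Matrix m n 𝕜) (i : m) :
    (A * Aᴴ) i i = ((∑ k, ‖A i k‖ ^ 2 : ℝ) : 𝕜) := by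
  simp [mul_apply, RCLike.mul_conj]

/-- `P = A Aᴴ` is a Hermitian idempotent, so `Pᵢᵢ = (P Pᴴ)ᵢᵢ = ∑ⱼ |Pᵢⱼ|² ≥ Pᵢᵢ²`. -/
lemma sum_norm_sq_le_one_of_isIdempotentElem [Fintype m] {A : Matrix m n 𝕜}
    (hA : IsIdempotentElem (A * Aᴴ)) (i : m) : ∑ k, ‖A i k‖ ^ 2 ≤ 1 := by
  set P := A * Aᴴ
  set t := ∑ k, ‖A i k‖ ^ 2
  have hP : Pᴴ = P := by simp [P, conjTranspose_mul]
  have hPii : P i i = t := mul_conjTranspose_self_apply_self A i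
  have ht : t = ∑ j, ‖P i j‖ ^ 2 := by
    have h := mul_conjTranspose_self_apply_self P i
    rwa [hP, hA.eq, hPii, RCLike.ofReal_inj] at h
  have ht0 : 0 ≤ t := by positivity
  have hsq : t ^ 2 ≤ t := calc
    t ^ 2 = ‖P i i‖ ^ 2 := by rw [hPii, RCLike.norm_ofReal, abs_of_nonneg ht0]
    _ ≤ t := ht ▸ single_le_sum (f := fun j => ‖P i j‖ ^ 2) (fun j _ => by positivity) (mem_univ i)
  nlinarith

lemma sum_norm_mul_norm_le_one_of_isIdempotentElem [Fintype m] {A B : Matrix m n 𝕜}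
    (hA : IsIdempotentElem (A * Aᴴ)) (hB : IsIdempotentElem (B * Bᴴ)) (i : m) :
    ∑ k, ‖A i k‖ * ‖B i k‖ ≤ 1 :=
  (Real.sum_mul_le_sqrt_mul_sqrt _ _ _).trans <| mul_le_one₀
    (Real.sqrt_le_one.2 (sum_norm_sq_le_one_of_isIdempotentElem hA i)) (Real.sqrt_nonneg _)
    (Real.sqrt_le_one.2 (sum_norm_sq_le_one_of_isIdempotentElem hB i))

lemma norm_mul_diagonal_mul_conjTranspose_apply_self_le [DecidableEq n] (U V : Matrix m n 𝕜)
    {s : n → ℝ} (hs : ∀ k, 0 ≤ s k) (i : m) :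
    ‖(U * diagonal (fun k => (s k : 𝕜)) * Vᴴ) i i‖ ≤ ∑ k, ‖U i k‖ * ‖V i k‖ * s k := by
  rw [mul_apply]
  refine (norm_sum_le _ _).trans_eq (sum_congr rfl fun k _ => ?_)
  rw [mul_diagonal, conjTranspose_apply, norm_mul, norm_mul, norm_star, RCLike.norm_ofReal,
    abs_of_nonneg (hs k)]
  ring

theorem sum_norm_diag_mul_diagonal_mul_rpow_le [DecidableEq n] {U V : Matrix n n 𝕜}
    {s : n → ℝ} (hs : ∀ k, 0 ≤ s k) (hU : IsIdempotentElem (Uᴴ * U))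
    (hV : IsIdempotentElem (Vᴴ * V)) {p : ℝ} (hp : 1 ≤ p) :
    ∑ i, ‖(U * diagonal (fun k => (s k : 𝕜)) * Vᴴ) i i‖ ^ p ≤ ∑ k, s k ^ p := by
  have hU' := isIdempotentElem_star_mul_self_iff_isIdempotentElem_self_mul_star.mp hU
  have hV' := isIdempotentElem_star_mul_self_iff_isIdempotentElem_self_mul_star.mp hV
  have hcol (k : n) : ∑ i, ‖U i k‖ * ‖V i k‖ ≤ 1 := by
    simpa using sum_norm_mul_norm_le_one_of_isIdempotentElem (A := Uᴴ) (B := Vᴴ)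
      (by simpa using hU) (by simpa using hV) k
  calc ∑ i, ‖(U * diagonal (fun k => (s k : 𝕜)) * Vᴴ) i i‖ ^ p
      ≤ ∑ i, (∑ k, ‖U i k‖ * ‖V i k‖ * s k) ^ p := sum_le_sum fun i _ =>
        Real.rpow_le_rpow (norm_nonneg _)
          (norm_mul_diagonal_mul_conjTranspose_apply_self_le U V hs i) (by linarith)
    _ ≤ ∑ k, s k ^ p := sum_rpow_sum_mul_le_sum_rpow (fun _ _ => by positivity)
        (sum_norm_mul_norm_le_one_of_isIdempotentElem hU' hV') hcol hs hp

theorem exists_eq_mul_diagonal_sqrt_eigenvalues_mul [DecidableEq n] (M : Matrix n n 𝕜) :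
    ∃ U V : Matrix n n 𝕜, IsIdempotentElem (Uᴴ * U) ∧ V ∈ unitaryGroup n 𝕜 ∧
      M = U * diagonal
        (fun k => ((√((isHermitian_conjTranspose_mul_self M).eigenvalues k) : ℝ) : 𝕜)) * Vᴴ := by
  set hH := isHermitian_conjTranspose_mul_self M
  set V : Matrix n n 𝕜 := (hH.eigenvectorUnitary : Matrix n n 𝕜)
  set σ : n → 𝕜 := fun k => ((√(hH.eigenvalues k) : ℝ) : 𝕜)
  set W := M * V
  have hσ : RCLike.ofReal ∘ hH.eigenvalues = fun k => σ k ^ 2 := funext fun k => by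
    simp [σ, ← RCLike.ofReal_pow, Real.sq_sqrt (eigenvalues_conjTranspose_mul_self_nonneg M k)]
  have hW : Wᴴ * W = diagonal fun k => σ k ^ 2 := by
    rw [← hσ, ← hH.conjStarAlgAut_star_eigenvectorUnitary, Unitary.conjStarAlgAut_star_apply]
    simp [W, V, conjTranspose_mul, Matrix.mul_assoc, star_eq_conjTranspose]
  have hVV : V * Vᴴ = 1 := Unitary.mul_star_self_of_mem hH.eigenvectorUnitary.2
  -- `(σ k)⁻¹ = 0` when `σ k = 0`: the corresponding column of `W` vanishes, see `hker`.
  refine ⟨W * diagonal fun k => (σ k)⁻¹, V, ?_, hH.eigenvectorUnitary.2, ?_⟩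
  · have hUU : (W * diagonal fun k => (σ k)⁻¹)ᴴ * (W * diagonal fun k => (σ k)⁻¹) =
        diagonal fun k => (σ k)⁻¹ * (σ k ^ 2 * (σ k)⁻¹) := by
      rw [conjTranspose_mul, diagonal_conjTranspose, Matrix.mul_assoc, ← Matrix.mul_assoc Wᴴ, hW,
        diagonal_mul_diagonal, diagonal_mul_diagonal]
      simp [σ]
    rw [IsIdempotentElem, hUU, diagonal_mul_diagonal]
    congr 1
    funext k
    by_cases h : σ k = 0
    · simp [h]
    · field_simp
  · have hker : (Wᴴ * W) * ((diagonal fun k => (σ k)⁻¹ * σ k) - 1) = 0 := by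
      rw [hW, mul_sub, diagonal_mul_diagonal, Matrix.mul_one, sub_eq_zero]
      congr 1
      funext k
      by_cases h : σ k = 0
      · simp [h]
      · field_simp
    rw [conjTranspose_mul_self_mul_eq_zero, mul_sub, Matrix.mul_one, sub_eq_zero,
      ← diagonal_mul_diagonal, ← Matrix.mul_assoc] at hker
    rw [hker, Matrix.mul_assoc, hVV, Matrix.mul_one]

end Matrix

theorem stmt_18 {n : ℕ} (M : Matrix (Fin n) (Fin n) ℂ) (p : ℝ) (hp : 1 ≤ p) :
    ∑ i, ‖M i i‖ ^ p ≤ ∑ i, singularValues M i ^ p := by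
  obtain ⟨U, V, hU, hV, hM⟩ := M.exists_eq_mul_diagonal_sqrt_eigenvalues_mul
  have hV' : IsIdempotentElem (Vᴴ * V) := by
    rw [← star_eq_conjTranspose, Unitary.star_mul_self_of_mem hV]
    exact IsIdempotentElem.one
  conv_lhs => rw [hM]
  exact sum_norm_diag_mul_diagonal_mul_rpow_le (fun k => Real.sqrt_nonneg _) hU hV' hp
end
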